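/- Let R be a commutative Noetherian ring, N a finitely generated R-module, M ≤ N a submodule, and S, S' two multiplicatively closed subsets of R. If every associated prime of N/M disjoint from S is also disjoint from S', then S'(M) ⊆ S(M), where S(M) := ⋃_{s∈S}(M :_N s). In particular, if for all p ∈ Ass_R(N/M), p ∩ S = ∅ ⟺ p ∩ S' = ∅, then S(M) = S'(M). -/

import Mathlib

/-!
Let `Q = S(P)`. An associated prime of `M ⧸ Q` is `Q :_R w` for some `w`; it misses `S`, since
`Q` is `S`-saturated, and, being finitely generated, it equals `P :_R s • w` for a single `s ∈ S`,
so it is also an associated prime of `M ⧸ P`. Now if `s' • x ∈ P` with `s' ∈ S'` but `x ∉ Q`,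
some associated prime of `M ⧸ Q` contains `Q :_R x ∋ s'`; by hypothesis it misses `S'`, which is
absurd.
-/

/-- The `S`-saturation `S(P) = ⋃_{s ∈ S} (P :_M s)` of a submodule `P`. -/
def Submodule.sat {R : Type*} [CommRing R] {M : Type*} [AddCommGroup M] [Module R M]
    (S : Submonoid R) (P : Submodule R M) : Submodule R M where
  carrier := {x | ∃ s ∈ S, s • x ∈ P}
  add_mem' := by
    rintro a b ⟨s, hs, hsa⟩ ⟨t, ht, htb⟩
    refine ⟨s * t, S.mul_mem hs ht, ?_⟩
    rw [smul_add]
    refine P.add_mem ?_ ?_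
    · rw [mul_smul, smul_comm]; exact P.smul_mem t hsa
    · rw [mul_smul]; exact P.smul_mem s htb
  zero_mem' := ⟨1, S.one_mem, by simp⟩
  smul_mem' := fun c x => by
    rintro ⟨s, hs, hsx⟩
    exact ⟨s, hs, by rw [smul_comm]; exact P.smul_mem c hsx⟩

namespace Submodule

section Quotient

variable {R M : Type*} [CommRing R] [AddCommGroup M] [Module R M] (N : Submodule R M)

theorem bot_colon_singleton_mkQ (x : M) :
    (⊥ : Submodule R (M ⧸ N)).colon {N.mkQ x} = N.colon {x} := by
  ext r
  rw [mem_colon_singleton, mem_colon_singleton, mem_bot, ← map_smul, mkQ_apply,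
    Quotient.mk_eq_zero]

theorem isAssociatedPrime_quotient_iff {I : Ideal R} :
    IsAssociatedPrime I (M ⧸ N) ↔ N.IsAssociatedPrime I := by
  rw [IsAssociatedPrime, Submodule.isAssociatedPrime_def, Submodule.isAssociatedPrime_def,
    N.mkQ_surjective.exists]
  simp only [bot_colon_singleton_mkQ]

end Quotient

section Saturation

variable {R M : Type*} [CommRing R] [AddCommGroup M] [Module R M] (S : Submonoid R)
  (P : Submodule R M)

theorem le_sat : P ≤ P.sat S :=
  fun x hx => ⟨1, S.one_mem, by rwa [one_smul]⟩

variable {S P}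

theorem mem_sat_of_smul_mem_sat {s : R} (hs : s ∈ S) {x : M} (h : s • x ∈ P.sat S) :
    x ∈ P.sat S := by
  obtain ⟨t, ht, htx⟩ := h
  exact ⟨t * s, S.mul_mem ht hs, by rwa [mul_smul]⟩

theorem colon_smul_le_colon_sat {s : R} (hs : s ∈ S) (x : M) :
    P.colon {s • x} ≤ (P.sat S).colon {x} := by
  intro r hr
  rw [mem_colon_singleton, smul_comm] at hr
  exact mem_colon_singleton.mpr ⟨s, hs, hr⟩

theorem notMem_colon_sat_of_isPrime {x : M} (hp : ((P.sat S).colon {x}).IsPrime) :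
    ∀ s ∈ S, s ∉ (P.sat S).colon {x} := by
  intro s hs hsx
  refine hp.ne_top ((Ideal.eq_top_iff_one _).mpr (mem_colon_singleton.mpr ?_))
  rw [one_smul]
  exact mem_sat_of_smul_mem_sat hs (mem_colon_singleton.mp hsx)

theorem exists_le_colon_smul_of_le_colon_sat {I : Ideal R} (hI : I.FG) {x : M}
    (h : I ≤ (P.sat S).colon {x}) : ∃ s ∈ S, I ≤ P.colon {s • x} := by
  induction I, hI using Submodule.fg_induction with
  | singleton t =>
    obtain ⟨s, hs, hst⟩ := mem_colon_singleton.mp (h (mem_span_singleton_self t))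
    refine ⟨s, hs, (span_singleton_le_iff_mem _ _).mpr (mem_colon_singleton.mpr ?_)⟩
    rwa [smul_comm]
  | sup I J _ _ ihI ihJ =>
    obtain ⟨s, hs, hIs⟩ := ihI (le_sup_left.trans h)
    obtain ⟨t, ht, hJt⟩ := ihJ (le_sup_right.trans h)
    refine ⟨s * t, S.mul_mem hs ht, sup_le (fun r hr => ?_) (fun r hr => ?_)⟩
    · rw [mem_colon_singleton, mul_comm, mul_smul, smul_comm]
      exact P.smul_mem t (mem_colon_singleton.mp (hIs hr))
    · rw [mem_colon_singleton, mul_smul, smul_comm]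
      exact P.smul_mem s (mem_colon_singleton.mp (hJt hr))

theorem associatedPrimes_quotient_sat_subset [IsNoetherianRing R] :
    associatedPrimes R (M ⧸ P.sat S) ⊆
      {p | p ∈ associatedPrimes R (M ⧸ P) ∧ ∀ s ∈ S, s ∉ p} := by
  intro p hp
  obtain ⟨hprime, w, rfl⟩ :=
    Submodule.isAssociatedPrime_iff.mp ((isAssociatedPrime_quotient_iff _).mp hp)
  obtain ⟨s, hs, hle⟩ :=
    exists_le_colon_smul_of_le_colon_sat (IsNoetherian.noetherian ((P.sat S).colon {w})) le_rfl
  have hcolon : (P.sat S).colon {w} = P.colon {s • w} :=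
    le_antisymm hle (colon_smul_le_colon_sat hs w)
  refine ⟨?_, notMem_colon_sat_of_isPrime hprime⟩
  rw [AssociatedPrimes.mem_iff, isAssociatedPrime_quotient_iff, Submodule.isAssociatedPrime_iff]
  exact ⟨hprime, s • w, hcolon⟩

end Saturation

end Submodule

theorem sat_le_sat_general {R : Type*} [CommRing R] [IsNoetherianRing R]
    {M : Type*} [AddCommGroup M] [Module R M]
    (P : Submodule R M) (S S' : Submonoid R)
    (h : ∀ p ∈ associatedPrimes R (M ⧸ P),
      (∀ s ∈ S, s ∉ p) → (∀ s ∈ S', s ∉ p)) :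
    Submodule.sat S' P ≤ Submodule.sat S P := by
  rintro x ⟨s', hs', hs'x⟩
  by_contra hx
  have hx0 : (P.sat S).mkQ x ≠ 0 := by
    rwa [Submodule.mkQ_apply, Ne, Submodule.Quotient.mk_eq_zero]
  obtain ⟨p, hp, hle⟩ := exists_le_isAssociatedPrime_of_isNoetherianRing R _ hx0
  obtain ⟨hpP, hpS⟩ := Submodule.associatedPrimes_quotient_sat_subset hp
  rw [Submodule.bot_colon_singleton_mkQ] at hle
  exact h p hpP hpS s' hs' (hle (Submodule.mem_colon_singleton.mpr (P.le_sat S hs'x)))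

/-- If every associated prime of `N/M` disjoint from `S` is also disjoint
from `S'`, then `S'(M) ⊆ S(M)`. -/
theorem sat_le_sat {R : Type*} [CommRing R] [IsNoetherianRing R]
    {M : Type*} [AddCommGroup M] [Module R M] [Module.Finite R M]
    (P : Submodule R M) (S S' : Submonoid R)
    (h : ∀ p ∈ associatedPrimes R (M ⧸ P),
      (∀ s ∈ S, s ∉ p) → (∀ s ∈ S', s ∉ p)) :
    Submodule.sat S' P ≤ Submodule.sat S P :=
  sat_le_sat_general P S S' h
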